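/- arXiv:1410.0170 — 5 statements merged into one kernel-verified Lean document; each statement's English description precedes it below -/
import Mathlib

section
/- Let l > 1 be an integer and λ₁, λ₂ nonzero reals. Suppose f: ℝ → (0,∞) satisfies both: (i) f'' = λ₂f' + (λ₁² − λ₁λ₂ − α/l)f, and (ii) α_F/(1−l) + (f')² + [α/l + λ₁λ₂ + (λ₂²−λ₁²)/(1−l)]f² + [(l/(1−l))λ₁ + ((l−2)/(1−l))λ₂] f f' = 0, for constants α, α_F. Then one of the following holds: (1) α = (λ₁²−λ₁λ₂)l, α_F = c²(lλ₁²−λ₂²), f = c constant; (2) λ₁ = λ₂, α = 0, α_F = (l−1)c₂²λ₁², f(t) = c₁e^{λ₁t}+c₂; (3) λ₂ ≠ lλ₁, α = [(3l²+l)λ₁²λ₂² − (l²+l)λ₁λ₂³ − 2l²λ₁³λ₂]/(lλ₁−λ₂)², α_F = 0, f(t) = c₀e^{(lλ₁²−λ₂²)t/(lλ₁−λ₂)}; (4) λ₂² − 2lλ₁² + lλ₁λ₂ = 0, α = l(λ₁−λ₂/2)², α_F = 0, f(t) = c₁e^{(λ₂/2)t}; and conversely each of (1)-(4) gives a solution.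 -/
open Real Polynomial

/-!
Differentiating (ii) and eliminating `f''` with (i) leaves a quadratic relation
`a f'² + b f f' + c f² = 0` with constant coefficients. It is trivial exactly when `λ₁ = λ₂`
and `α = 0`; then (i) reads `f'' = λ₁ f'`, which is family (2). Otherwise `f'/f` is continuous
with values among the roots of a nonzero polynomial, hence constant, so `f = c e^{kt}`. Then (i)
gives `k² = λ₂ k + A` (`A` the coefficient of `f` in (i)), and (ii) becomes
`α_F/(1-l) + B e^{2kt} = 0`: for `k = 0` this is family (1), for `k ≠ 0` both `α_F` and `B`
vanish, which pins down `k` and `α` (family (3)). Family (4) is the part of family (3) where the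
rate is `λ₂/2`; each family is checked to be a solution by substitution.
-/

theorem Continuous.eq_of_forall_isRoot {T K : Type*} [TopologicalSpace T] [PreconnectedSpace T]
    [CommRing K] [IsDomain K] [TopologicalSpace K] [T1Space K] {p : K[X]} (hp : p ≠ 0)
    {u : T → K} (hu : Continuous u) (hroot : ∀ x, p.IsRoot (u x)) (x y : T) : u x = u y :=
  isPreconnected_univ.constant_of_mapsTo (finite_setOfPred_isRoot hp).isDiscrete
    hu.continuousOn (fun x _ => hroot x) trivial trivial

theorem Continuous.eq_of_forall_quadratic_eq_zero {T K : Type*} [TopologicalSpace T]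
    [PreconnectedSpace T] [Field K] [TopologicalSpace K] [T1Space K] {a b c : K}
    (habc : ¬(a = 0 ∧ b = 0 ∧ c = 0)) {u : T → K} (hu : Continuous u)
    (h : ∀ x, a * u x ^ 2 + b * u x + c = 0) (x y : T) : u x = u y := by
  refine hu.eq_of_forall_isRoot (p := C a * X ^ 2 + C b * X + C c) ?_
    (fun x => by simpa using h x) x y
  intro hp
  refine habc ⟨?_, ?_, ?_⟩
  · simpa using congrArg (coeff · 2) hp
  · simpa using congrArg (coeff · 1) hp
  · simpa using congrArg (coeff · 0) hp

theorem hasDerivAt_mul_exp (c k t : ℝ) :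
    HasDerivAt (fun t => c * exp (k * t)) (c * k * exp (k * t)) t :=
  (((hasDerivAt_id' t).const_mul k).exp.const_mul c).congr_deriv (by ring)

theorem eq_mul_exp_of_deriv_eq_mul {f : ℝ → ℝ} (hf : Differentiable ℝ f) {k : ℝ}
    (h : ∀ t, deriv f t = k * f t) (t : ℝ) : f t = f 0 * exp (k * t) := by
  have hderiv : ∀ s, HasDerivAt (fun s => f s * exp (-k * s)) 0 s := fun s => by
    refine ((hf s).hasDerivAt.mul ((hasDerivAt_id' s).const_mul (-k)).exp).congr_deriv ?_
    rw [h s]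
    ring
  have hconst := is_const_of_deriv_eq_zero (fun s => (hderiv s).differentiableAt)
    (fun s => (hderiv s).deriv) t 0
  calc f t = f t * exp (-k * t) * exp (k * t) := by rw [mul_assoc, ← exp_add]; simp
    _ = f 0 * exp (k * t) := by rw [hconst]; simp

theorem eq_mul_exp_add_of_deriv_deriv_eq_mul {f : ℝ → ℝ} (hf : Differentiable ℝ f)
    (hf' : Differentiable ℝ (deriv f)) {k : ℝ} (hk : k ≠ 0)
    (h : ∀ t, deriv (deriv f) t = k * deriv f t) (t : ℝ) :
    f t = deriv f 0 / k * exp (k * t) + (f 0 - deriv f 0 / k) := by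
  have hderiv : ∀ s, HasDerivAt (fun s => f s - deriv f 0 / k * exp (k * s)) 0 s := fun s => by
    refine ((hf s).hasDerivAt.sub (hasDerivAt_mul_exp (deriv f 0 / k) k s)).congr_deriv ?_
    rw [eq_mul_exp_of_deriv_eq_mul hf' h s]
    field_simp
    ring
  have hconst := is_const_of_deriv_eq_zero (fun s => (hderiv s).differentiableAt)
    (fun s => (hderiv s).deriv) t 0
  simp only [mul_zero, exp_zero, mul_one] at hconst
  linarith

theorem eq_zero_of_forall_add_mul_exp_eq_zero {a b k : ℝ} (hk : k ≠ 0)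
    (h : ∀ t, a + b * exp (k * t) = 0) : a = 0 ∧ b = 0 := by
  have h0 := h 0
  have h1 := h 1
  simp only [mul_zero, exp_zero, mul_one] at h0 h1
  have hb' : b * (exp k - 1) = 0 := by linear_combination h1 - h0
  have hb : b = 0 := by simpa [sub_eq_zero, hk] using hb'
  exact ⟨by linarith, hb⟩

section ConstantCoefficientSystem

variable {p A K C D : ℝ} {f : ℝ → ℝ}

theorem quadratic_eq_zero_of_system (hf : Differentiable ℝ f) (hf' : Differentiable ℝ (deriv f))
    (h1 : ∀ t, deriv (deriv f) t = p * deriv f t + A * f t)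
    (h2 : ∀ t, K + deriv f t ^ 2 + C * f t ^ 2 + D * f t * deriv f t = 0) (t : ℝ) :
    (2 * p + D) * deriv f t ^ 2 + (2 * A + 2 * C + D * p) * (f t * deriv f t)
      + D * A * f t ^ 2 = 0 := by
  have hderiv := (((hasDerivAt_const t K).add ((hf' t).hasDerivAt.pow 2)).add
    (((hf t).hasDerivAt.pow 2).const_mul C)).add
    (((hf t).hasDerivAt.const_mul D).mul (hf' t).hasDerivAt)
  have hzero : HasDerivAt (fun s => K + deriv f s ^ 2 + C * f s ^ 2 + D * f s * deriv f s) 0 t := by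
    simpa only [h2] using hasDerivAt_const t (0 : ℝ)
  have := hderiv.unique hzero
  simp only [Nat.cast_ofNat, zero_add] at this
  linear_combination this - (2 * deriv f t + D * f t) * h1 t

theorem exists_deriv_eq_mul_of_system (hf : Differentiable ℝ f)
    (hf' : Differentiable ℝ (deriv f)) (hf0 : ∀ t, f t ≠ 0)
    (h1 : ∀ t, deriv (deriv f) t = p * deriv f t + A * f t)
    (h2 : ∀ t, K + deriv f t ^ 2 + C * f t ^ 2 + D * f t * deriv f t = 0)
    (hnondeg : ¬(2 * p + D = 0 ∧ 2 * A + 2 * C + D * p = 0 ∧ D * A = 0)) :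
    ∃ k, ∀ t, deriv f t = k * f t := by
  have hquad : ∀ t, (2 * p + D) * (deriv f t / f t) ^ 2
      + (2 * A + 2 * C + D * p) * (deriv f t / f t)
      + D * A = 0 := fun t => by
    field_simp [hf0 t]
    linear_combination quadratic_eq_zero_of_system hf hf' h1 h2 t
  have hcont : Continuous fun t => deriv f t / f t := hf'.continuous.div hf.continuous hf0
  refine ⟨deriv f 0 / f 0, fun t => ?_⟩
  rw [← hcont.eq_of_forall_quadratic_eq_zero hnondeg hquad t 0, div_mul_cancel₀ _ (hf0 t)]

theorem sq_eq_of_system_of_deriv_eq_mul (hf : Differentiable ℝ f) (hf0 : f 0 ≠ 0)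
    (h1 : ∀ t, deriv (deriv f) t = p * deriv f t + A * f t) {k : ℝ}
    (hk : ∀ t, deriv f t = k * f t) : k ^ 2 = p * k + A := by
  have hdd : deriv (deriv f) 0 = k * (k * f 0) := by
    rw [show deriv f = fun s => k * f s from funext hk, deriv_const_mul _ (hf 0), hk 0]
  have := h1 0
  rw [hdd, hk 0] at this
  exact mul_right_cancel₀ hf0 (by linear_combination this)

theorem eq_zero_of_system_of_deriv_eq_zero (hf0 : f 0 ≠ 0)
    (h1 : ∀ t, deriv (deriv f) t = p * deriv f t + A * f t)
    (h2 : ∀ t, K + deriv f t ^ 2 + C * f t ^ 2 + D * f t * deriv f t = 0)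
    (hk : ∀ t, deriv f t = 0) : A = 0 ∧ K + C * f 0 ^ 2 = 0 := by
  have h10 := h1 0
  rw [show deriv f = fun _ => 0 from funext hk, deriv_const] at h10
  have h20 := h2 0
  rw [hk 0] at h20
  exact ⟨by simpa [hf0] using h10.symm, by simpa using h20⟩

theorem eq_zero_of_system_of_deriv_eq_mul (hf : Differentiable ℝ f) (hf0 : f 0 ≠ 0)
    (h2 : ∀ t, K + deriv f t ^ 2 + C * f t ^ 2 + D * f t * deriv f t = 0) {k : ℝ}
    (hk : ∀ t, deriv f t = k * f t) (hk0 : k ≠ 0) : K = 0 ∧ k ^ 2 + C + D * k = 0 := by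
  have hexp : ∀ t, K + (k ^ 2 + C + D * k) * f 0 ^ 2 * exp (2 * k * t) = 0 := fun t => by
    have h2t := h2 t
    rw [hk t, eq_mul_exp_of_deriv_eq_mul hf hk t] at h2t
    rw [show 2 * k * t = k * t + k * t by ring, exp_add]
    linear_combination h2t
  obtain ⟨hK, hB⟩ := eq_zero_of_forall_add_mul_exp_eq_zero (mul_ne_zero two_ne_zero hk0) hexp
  exact ⟨hK, by simpa [hf0] using hB⟩

theorem system_of_eq_mul_exp_add {c k d : ℝ} (hf : ∀ t, f t = c * exp (k * t) + d)
    (hA : c * (k ^ 2 - p * k - A) = 0) (hAd : A * d = 0) (hC : c ^ 2 * (k ^ 2 + C + D * k) = 0)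
    (hCd : c * d * (2 * C + D * k) = 0) (hK : K + C * d ^ 2 = 0) :
    (∀ t, deriv (deriv f) t = p * deriv f t + A * f t) ∧
      ∀ t, K + deriv f t ^ 2 + C * f t ^ 2 + D * f t * deriv f t = 0 := by
  obtain rfl : f = fun t => c * exp (k * t) + d := funext hf
  have hd : deriv (fun t => c * exp (k * t) + d) = fun t => c * k * exp (k * t) :=
    funext fun t => ((hasDerivAt_mul_exp c k t).add_const d).deriv
  have hdd : deriv (fun t => c * k * exp (k * t)) = fun t => c * k * k * exp (k * t) :=
    funext fun t => (hasDerivAt_mul_exp (c * k) k t).deriv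
  rw [hd, hdd]
  exact ⟨fun t => by linear_combination exp (k * t) * hA - hAd,
    fun t => by linear_combination exp (k * t) ^ 2 * hC + exp (k * t) * hCd + hK⟩

end ConstantCoefficientSystem

namespace GRW

/- `coeffA` is the coefficient of `f` in (i); `coeffC` and `coeffD` are those of `f²` and `f f'`
in (ii). -/
noncomputable def coeffA (l : ℕ) (l1 l2 α : ℝ) : ℝ := l1 ^ 2 - l1 * l2 - α / (l : ℝ)

noncomputable def coeffC (l : ℕ) (l1 l2 α : ℝ) : ℝ :=
  α / (l : ℝ) + l1 * l2 + (l2 ^ 2 - l1 ^ 2) / (1 - (l : ℝ))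

noncomputable def coeffD (l : ℕ) (l1 l2 : ℝ) : ℝ :=
  ((l : ℝ) / (1 - (l : ℝ))) * l1 + (((l : ℝ) - 2) / (1 - (l : ℝ))) * l2

def IsEinstein (l : ℕ) (l1 l2 α αF : ℝ) (f : ℝ → ℝ) : Prop :=
  (∀ t, deriv (deriv f) t = l2 * deriv f t + coeffA l l1 l2 α * f t) ∧
    ∀ t, αF / (1 - (l : ℝ)) + deriv f t ^ 2 + coeffC l l1 l2 α * f t ^ 2
      + coeffD l l1 l2 * f t * deriv f t = 0

variable {l : ℕ} {l1 l2 α αF : ℝ} {f : ℝ → ℝ}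

theorem coeffD_self (hl : (1 : ℝ) < l) : coeffD l l1 l1 = -2 * l1 := by
  have : 1 - (l : ℝ) ≠ 0 := by linarith
  unfold coeffD
  field_simp
  ring

theorem eq_of_two_mul_add_coeffD_eq_zero (hl : (1 : ℝ) < l) (h : 2 * l2 + coeffD l l1 l2 = 0) :
    l1 = l2 := by
  have : 1 - (l : ℝ) ≠ 0 := by linarith
  unfold coeffD at h
  field_simp at h
  have : (l : ℝ) * (l1 - l2) = 0 := by linear_combination h
  rcases mul_eq_zero.mp this with h | h
  · linarith
  · linarith

theorem quadratic_coeffs_not_all_zero (hl : (1 : ℝ) < l) (hl1 : l1 ≠ 0)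
    (h : ¬(l1 = l2 ∧ α = 0)) :
    ¬(2 * l2 + coeffD l l1 l2 = 0 ∧
      2 * coeffA l l1 l2 α + 2 * coeffC l l1 l2 α + coeffD l l1 l2 * l2 = 0 ∧
      coeffD l l1 l2 * coeffA l l1 l2 α = 0) := by
  rintro ⟨hD, -, hDA⟩
  obtain rfl := eq_of_two_mul_add_coeffD_eq_zero hl hD
  rw [coeffD_self hl, coeffA] at hDA
  have : (l : ℝ) ≠ 0 := by positivity
  field_simp at hDA
  exact h ⟨rfl, by simpa [hl1] using hDA⟩

theorem eq_of_coeffA_eq_zero (hl : (1 : ℝ) < l) (h : coeffA l l1 l2 α = 0) :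
    α = (l1 ^ 2 - l1 * l2) * l := by
  have : (l : ℝ) ≠ 0 := by positivity
  unfold coeffA at h
  field_simp at h
  linarith

theorem alphaF_eq_of_const (hl : (1 : ℝ) < l) (hα : α = (l1 ^ 2 - l1 * l2) * l) {c : ℝ}
    (h : αF / (1 - l) + coeffC l l1 l2 α * c ^ 2 = 0) : αF = c ^ 2 * (l * l1 ^ 2 - l2 ^ 2) := by
  have : (l : ℝ) ≠ 0 := by positivity
  have : 1 - (l : ℝ) ≠ 0 := by linarith
  rw [coeffC, hα] at h
  field_simp at h
  linear_combination h

theorem alphaF_eq_of_linear (hl : (1 : ℝ) < l) (hl1 : l1 ≠ 0) {c d : ℝ}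
    (h : αF / (1 - l) + d ^ 2 + coeffC l l1 l1 0 * c ^ 2 + coeffD l l1 l1 * c * d = 0) :
    αF = (l - 1) * (c - d / l1) ^ 2 * l1 ^ 2 := by
  have : 1 - (l : ℝ) ≠ 0 := by linarith
  rw [coeffC, coeffD_self hl, zero_div, zero_add, sub_self, zero_div, add_zero] at h
  have hK : αF / (1 - l) = -(l1 * c - d) ^ 2 := by linear_combination h
  rw [div_eq_iff this] at hK
  rw [hK]
  field_simp
  ring

theorem rate_eq_of_exp_solution (hl : (1 : ℝ) < l) (hl1 : l1 ≠ 0) {k : ℝ}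
    (hA : k ^ 2 = l2 * k + coeffA l l1 l2 α)
    (hC : k ^ 2 + coeffC l l1 l2 α + coeffD l l1 l2 * k = 0) :
    l2 ≠ l * l1 ∧
      α = ((3 * (l : ℝ) ^ 2 + (l : ℝ)) * l1 ^ 2 * l2 ^ 2
        - ((l : ℝ) ^ 2 + (l : ℝ)) * l1 * l2 ^ 3
        - 2 * (l : ℝ) ^ 2 * l1 ^ 3 * l2) / ((l : ℝ) * l1 - l2) ^ 2 ∧
      k = ((l : ℝ) * l1 ^ 2 - l2 ^ 2) / ((l : ℝ) * l1 - l2) := by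
  have hl0 : (l : ℝ) ≠ 0 := by positivity
  have hl1' : 1 - (l : ℝ) ≠ 0 := by linarith
  have hrate : ((l : ℝ) * l1 - l2) * k = l * l1 ^ 2 - l2 ^ 2 := by
    have : (coeffD l l1 l2 + l2) * k + (coeffC l l1 l2 α + coeffA l l1 l2 α) = 0 := by
      linear_combination hC - hA
    simp only [coeffA, coeffC, coeffD] at this
    field_simp at this
    exact mul_left_cancel₀ hl0 (by linear_combination this)
  have hne : l2 ≠ l * l1 := by
    rintro rfl
    have : (l : ℝ) * (1 - l) * l1 ^ 2 = 0 := by linear_combination -hrate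
    exact mul_ne_zero (mul_ne_zero hl0 hl1') (pow_ne_zero 2 hl1) this
  have hden : (l : ℝ) * l1 - l2 ≠ 0 := sub_ne_zero.mpr (Ne.symm hne)
  have hk : k = ((l : ℝ) * l1 ^ 2 - l2 ^ 2) / ((l : ℝ) * l1 - l2) := by
    rw [eq_div_iff hden]; linear_combination hrate
  refine ⟨hne, ?_, hk⟩
  rw [coeffA, hk] at hA
  field_simp at hA ⊢
  linear_combination hA

theorem isEinstein_of_const (hl : (1 : ℝ) < l) {c : ℝ} (hα : α = (l1 ^ 2 - l1 * l2) * l)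
    (hαF : αF = c ^ 2 * (l * l1 ^ 2 - l2 ^ 2)) (hf : ∀ t, f t = c) :
    IsEinstein l l1 l2 α αF f := by
  have : (l : ℝ) ≠ 0 := by positivity
  have : 1 - (l : ℝ) ≠ 0 := by linarith
  refine system_of_eq_mul_exp_add (c := 0) (k := 0) (d := c) (fun t => by simp [hf t])
    (by ring) ?_ (by ring) (by ring) ?_
  · rw [coeffA, hα]; field_simp; ring
  · rw [coeffC, hα, hαF]; field_simp; ring

theorem isEinstein_of_linear (hl : (1 : ℝ) < l) {c₁ c₂ : ℝ}
    (hαF : αF = (l - 1) * c₂ ^ 2 * l1 ^ 2) (hf : ∀ t, f t = c₁ * exp (l1 * t) + c₂) :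
    IsEinstein l l1 l1 0 αF f := by
  have : 1 - (l : ℝ) ≠ 0 := by linarith
  refine system_of_eq_mul_exp_add hf ?_ ?_ ?_ ?_ ?_ <;>
    simp only [coeffA, coeffC, coeffD_self hl, hαF] <;> field_simp <;> ring

theorem isEinstein_of_exp (hl : (1 : ℝ) < l) (hne : l2 ≠ l * l1)
    (hα : α = ((3 * (l : ℝ) ^ 2 + (l : ℝ)) * l1 ^ 2 * l2 ^ 2
        - ((l : ℝ) ^ 2 + (l : ℝ)) * l1 * l2 ^ 3
        - 2 * (l : ℝ) ^ 2 * l1 ^ 3 * l2) / ((l : ℝ) * l1 - l2) ^ 2) {c : ℝ}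
    (hf : ∀ t, f t = c * exp ((((l : ℝ) * l1 ^ 2 - l2 ^ 2) / ((l : ℝ) * l1 - l2)) * t)) :
    IsEinstein l l1 l2 α 0 f := by
  have : (l : ℝ) ≠ 0 := by positivity
  have : 1 - (l : ℝ) ≠ 0 := by linarith
  have : (l : ℝ) * l1 - l2 ≠ 0 := sub_ne_zero.mpr (Ne.symm hne)
  refine system_of_eq_mul_exp_add (d := 0) (fun t => by rw [hf t, add_zero]) ?_ (mul_zero _) ?_
    (by ring) (by simp) <;> simp only [coeffA, coeffC, coeffD, hα] <;> field_simp <;> ring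

theorem isEinstein_of_half_exp (hl : (1 : ℝ) < l)
    (hR : l2 ^ 2 - 2 * l * l1 ^ 2 + l * l1 * l2 = 0) (hα : α = l * (l1 - l2 / 2) ^ 2) {c : ℝ}
    (hf : ∀ t, f t = c * exp ((l2 / 2) * t)) :
    IsEinstein l l1 l2 α 0 f := by
  have : (l : ℝ) ≠ 0 := by positivity
  have : 1 - (l : ℝ) ≠ 0 := by linarith
  refine system_of_eq_mul_exp_add (d := 0) (fun t => by rw [hf t, add_zero]) ?_ (mul_zero _) ?_
    (by ring) (by simp) <;> simp only [coeffA, coeffC, coeffD, hα] <;> field_simp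
  · ring
  · linear_combination 2 * c ^ 2 * hR

end GRW

theorem GRW_quarter_symmetric_Einstein_classification_general
    (l : ℕ) (hl : 1 < l) (l1 l2 : ℝ) (hl1 : l1 ≠ 0)
    (f : ℝ → ℝ) (hfpos : ∀ t, 0 < f t) (hf : ContDiff ℝ 2 f)
    (α αF : ℝ) :
    ((∀ t, deriv (deriv f) t =
        l2 * deriv f t + (l1 ^ 2 - l1 * l2 - α / (l : ℝ)) * f t) ∧
     (∀ t, αF / (1 - (l : ℝ)) + (deriv f t) ^ 2
        + (α / (l : ℝ) + l1 * l2 + (l2 ^ 2 - l1 ^ 2) / (1 - (l : ℝ))) * (f t) ^ 2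
        + (((l : ℝ) / (1 - (l : ℝ))) * l1 + (((l : ℝ) - 2) / (1 - (l : ℝ))) * l2)
            * f t * deriv f t = 0))
    ↔
    -- (1)
    ((∃ c : ℝ, α = (l1 ^ 2 - l1 * l2) * (l : ℝ) ∧
        αF = c ^ 2 * ((l : ℝ) * l1 ^ 2 - l2 ^ 2) ∧ (∀ t, f t = c)) ∨
    -- (2)
     (l1 = l2 ∧ α = 0 ∧
        ∃ c₁ c₂ : ℝ, αF = ((l : ℝ) - 1) * c₂ ^ 2 * l1 ^ 2 ∧
          (∀ t, f t = c₁ * exp (l1 * t) + c₂)) ∨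
    -- (3)
     (l2 ≠ (l : ℝ) * l1 ∧
        α = ((3 * (l : ℝ) ^ 2 + (l : ℝ)) * l1 ^ 2 * l2 ^ 2
              - ((l : ℝ) ^ 2 + (l : ℝ)) * l1 * l2 ^ 3
              - 2 * (l : ℝ) ^ 2 * l1 ^ 3 * l2) / ((l : ℝ) * l1 - l2) ^ 2 ∧
        αF = 0 ∧
        ∃ c₀ : ℝ, ∀ t, f t =
          c₀ * exp ((((l : ℝ) * l1 ^ 2 - l2 ^ 2) / ((l : ℝ) * l1 - l2)) * t)) ∨
    -- (4)
     (l2 ^ 2 - 2 * (l : ℝ) * l1 ^ 2 + (l : ℝ) * l1 * l2 = 0 ∧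
        α = (l : ℝ) * (l1 - l2 / 2) ^ 2 ∧ αF = 0 ∧
        ∃ c₁ : ℝ, ∀ t, f t = c₁ * exp ((l2 / 2) * t))) := by
  have hL : (1 : ℝ) < l := by exact_mod_cast hl
  have hdf : Differentiable ℝ f := hf.differentiable (by norm_num)
  have hdf' : Differentiable ℝ (deriv f) := hf.differentiable_deriv_two
  have hf0 : ∀ t, f t ≠ 0 := fun t => (hfpos t).ne'
  constructor
  · rintro ⟨h1, h2⟩
    by_cases hdeg : l1 = l2 ∧ α = 0
    · obtain ⟨rfl, rfl⟩ := hdeg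
      have h1' : ∀ t, deriv (deriv f) t = l1 * deriv f t := fun t => by rw [h1 t]; ring
      exact Or.inr (Or.inl ⟨rfl, rfl, deriv f 0 / l1, f 0 - deriv f 0 / l1,
        GRW.alphaF_eq_of_linear hL hl1 (h2 0),
        eq_mul_exp_add_of_deriv_deriv_eq_mul hdf hdf' hl1 h1'⟩)
    obtain ⟨k, hk⟩ := exists_deriv_eq_mul_of_system hdf hdf' hf0 h1 h2
      (GRW.quadratic_coeffs_not_all_zero hL hl1 hdeg)
    have hfk := eq_mul_exp_of_deriv_eq_mul hdf hk
    rcases eq_or_ne k 0 with rfl | hk0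
    · obtain ⟨hA, hC⟩ := eq_zero_of_system_of_deriv_eq_zero (hf0 0) h1 h2 (by simpa using hk)
      have hα := GRW.eq_of_coeffA_eq_zero hL hA
      exact Or.inl ⟨f 0, hα, GRW.alphaF_eq_of_const hL hα hC, fun t => by simp [hfk t]⟩
    · have hkA := sq_eq_of_system_of_deriv_eq_mul hdf (hf0 0) h1 hk
      obtain ⟨hK, hC⟩ := eq_zero_of_system_of_deriv_eq_mul hdf (hf0 0) h2 hk hk0
      obtain ⟨hne, hα, rfl⟩ := GRW.rate_eq_of_exp_solution hL hl1 hkA hC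
      have hαF : αF = 0 := (div_eq_zero_iff.mp hK).resolve_right (sub_ne_zero.mpr hL.ne)
      exact Or.inr (Or.inr (Or.inl ⟨hne, hα, hαF, f 0, hfk⟩))
  · rintro (⟨c, hα, hαF, hfc⟩ | ⟨rfl, rfl, c₁, c₂, hαF, hfe⟩
      | ⟨hne, hα, rfl, c₀, hfe⟩ | ⟨hR, hα, rfl, c₁, hfe⟩)
    · exact GRW.isEinstein_of_const hL hα hαF hfc
    · exact GRW.isEinstein_of_linear hL hαF hfe
    · exact GRW.isEinstein_of_exp hL hne hα hfe
    · exact GRW.isEinstein_of_half_exp hL hR hα hfe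

/-- Theorem 3.16: classification of Einstein generalized Robertson-Walker
space-times `M = I × F`, metric `−dt² + f(t)² g_F`, `P = ∂/∂t`, `dim F = l > 1`, with
quarter-symmetric connection: `f : ℝ → (0,∞)` together with constants `α` (Einstein
constant of `M`) and `α_F` (Einstein constant of `F`) satisfies the two equations
(i) `f'' = λ₂ f' + (λ₁² − λ₁λ₂ − α/l) f` and
(ii) `α_F/(1−l) + (f')² + [α/l + λ₁λ₂ + (λ₂²−λ₁²)/(1−l)] f²
      + [(l/(1−l))λ₁ + ((l−2)/(1−l))λ₂] f f' = 0`
if and only if one of the four listed conditions holds. -/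
theorem GRW_quarter_symmetric_Einstein_classification
    (l : ℕ) (hl : 1 < l) (l1 l2 : ℝ) (hl1 : l1 ≠ 0) (hl2 : l2 ≠ 0)
    (f : ℝ → ℝ) (hfpos : ∀ t, 0 < f t) (hf : ContDiff ℝ 2 f)
    (α αF : ℝ) :
    ((∀ t, deriv (deriv f) t =
        l2 * deriv f t + (l1 ^ 2 - l1 * l2 - α / (l : ℝ)) * f t) ∧
     (∀ t, αF / (1 - (l : ℝ)) + (deriv f t) ^ 2
        + (α / (l : ℝ) + l1 * l2 + (l2 ^ 2 - l1 ^ 2) / (1 - (l : ℝ))) * (f t) ^ 2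
        + (((l : ℝ) / (1 - (l : ℝ))) * l1 + (((l : ℝ) - 2) / (1 - (l : ℝ))) * l2)
            * f t * deriv f t = 0))
    ↔
    -- (1)
    ((∃ c : ℝ, α = (l1 ^ 2 - l1 * l2) * (l : ℝ) ∧
        αF = c ^ 2 * ((l : ℝ) * l1 ^ 2 - l2 ^ 2) ∧ (∀ t, f t = c)) ∨
    -- (2)
     (l1 = l2 ∧ α = 0 ∧
        ∃ c₁ c₂ : ℝ, αF = ((l : ℝ) - 1) * c₂ ^ 2 * l1 ^ 2 ∧
          (∀ t, f t = c₁ * exp (l1 * t) + c₂)) ∨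
    -- (3)
     (l2 ≠ (l : ℝ) * l1 ∧
        α = ((3 * (l : ℝ) ^ 2 + (l : ℝ)) * l1 ^ 2 * l2 ^ 2
              - ((l : ℝ) ^ 2 + (l : ℝ)) * l1 * l2 ^ 3
              - 2 * (l : ℝ) ^ 2 * l1 ^ 3 * l2) / ((l : ℝ) * l1 - l2) ^ 2 ∧
        αF = 0 ∧
        ∃ c₀ : ℝ, ∀ t, f t =
          c₀ * exp ((((l : ℝ) * l1 ^ 2 - l2 ^ 2) / ((l : ℝ) * l1 - l2)) * t)) ∨
    -- (4)
     (l2 ^ 2 - 2 * (l : ℝ) * l1 ^ 2 + (l : ℝ) * l1 * l2 = 0 ∧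
        α = (l : ℝ) * (l1 - l2 / 2) ^ 2 ∧ αF = 0 ∧
        ∃ c₁ : ℝ, ∀ t, f t = c₁ * exp ((l2 / 2) * t))) :=
  GRW_quarter_symmetric_Einstein_classification_general l hl l1 l2 hl1 f hfpos hf α αF
end

section
/- Let l ≠ 3 be a positive integer and λ₁, λ₂ nonzero reals, S̄ constant. Then v: ℝ → (0,∞) satisfies v'' + ((l−3)/4)(v')²/v − (l/2)(λ₁+λ₂)v' + [(l+1)λ₁λ₂ − λ₁² − λ₂² + S̄/l]v = 0 if and only if w := v^{(l+1)/4} satisfies the linear ODE w'' − (l/2)(λ₁+λ₂)w' + ((l+1)/4)[(l+1)λ₁λ₂ − λ₁² − λ₂² + S̄/l]w = 0. -/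
open Real

/-!
Write `w = v ^ p` for a positive function `v`. The chain rule gives
`w' = p v^(p-1) v'` and `w'' = p v^(p-1) (v'' + (p - 1) v'^2 / v)`, so that
`w'' - C w' + p K w = p v^(p-1) (v'' + (p - 1) v'^2 / v - C v' + K v)`.
The factor `p v^(p-1)` never vanishes for `p ≠ 0`, and with `p = (l + 1) / 4` one has
`p - 1 = (l - 3) / 4`.
-/

namespace RpowSubstitution

variable {v : ℝ → ℝ} (p : ℝ)

theorem deriv_rpow (hv : Differentiable ℝ v) (hpos : ∀ t, 0 < v t) :
    deriv (fun s => v s ^ p) = fun t => p * v t ^ (p - 1) * deriv v t := by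
  funext t
  rw [deriv_rpow_const (hv t) (Or.inl (hpos t).ne')]
  ring

theorem deriv_deriv_rpow (hv : Differentiable ℝ v) (hv' : Differentiable ℝ (deriv v))
    (hpos : ∀ t, 0 < v t) (t : ℝ) :
    deriv (deriv fun s => v s ^ p) t
      = p * v t ^ (p - 1) * (deriv (deriv v) t + (p - 1) * deriv v t ^ 2 / v t) := by
  have hvt : 0 < v t := hpos t
  have hfactor : HasDerivAt (fun s => p * v s ^ (p - 1))
      (p * (deriv v t * (p - 1) * v t ^ (p - 1 - 1))) t :=
    ((hv t).hasDerivAt.rpow_const (Or.inl hvt.ne')).const_mul p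
  have hw' : HasDerivAt (fun s => p * v s ^ (p - 1) * deriv v s)
      (p * (deriv v t * (p - 1) * v t ^ (p - 1 - 1)) * deriv v t
        + p * v t ^ (p - 1) * deriv (deriv v) t) t :=
    hfactor.mul (hv' t).hasDerivAt
  rw [deriv_rpow p hv hpos, hw'.deriv, rpow_sub hvt, rpow_one]
  field_simp
  ring

theorem ode_rpow_eq_mul (hv : Differentiable ℝ v) (hv' : Differentiable ℝ (deriv v))
    (hpos : ∀ t, 0 < v t) (C K t : ℝ) :
    deriv (deriv fun s => v s ^ p) t - C * deriv (fun s => v s ^ p) t + p * K * v t ^ p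
      = p * v t ^ (p - 1)
        * (deriv (deriv v) t + (p - 1) * deriv v t ^ 2 / v t - C * deriv v t + K * v t) := by
  have hvp : v t ^ p = v t ^ (p - 1) * v t := by
    rw [← rpow_add_one (hpos t).ne', sub_add_cancel]
  rw [deriv_deriv_rpow p hv hv' hpos, deriv_rpow p hv hpos, hvp]
  ring

theorem ode_iff_ode_rpow (hp : p ≠ 0) (hv : Differentiable ℝ v)
    (hv' : Differentiable ℝ (deriv v)) (hpos : ∀ t, 0 < v t) (C K : ℝ) :
    (∀ t, deriv (deriv v) t + (p - 1) * deriv v t ^ 2 / v t - C * deriv v t + K * v t = 0)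
      ↔ ∀ t, deriv (deriv fun s => v s ^ p) t - C * deriv (fun s => v s ^ p) t
          + p * K * v t ^ p = 0 := by
  refine forall_congr' fun t => ?_
  have hfactor : p * v t ^ (p - 1) ≠ 0 := mul_ne_zero hp (rpow_pos_of_pos (hpos t) _).ne'
  rw [ode_rpow_eq_mul p hv hv' hpos, mul_eq_zero, or_iff_right hfactor]

end RpowSubstitution

theorem quarter_symmetric_scalar_ODE_substitution_general
    (l : ℕ)
    (l1 l2 Sb : ℝ)
    (v : ℝ → ℝ) (hvpos : ∀ t, 0 < v t) (hv : ContDiff ℝ 2 v) :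
    (∀ t, deriv (deriv v) t + (((l : ℝ) - 3) / 4) * (deriv v t) ^ 2 / v t
        - ((l : ℝ) / 2) * (l1 + l2) * deriv v t
        + (((l : ℝ) + 1) * l1 * l2 - l1 ^ 2 - l2 ^ 2 + Sb / (l : ℝ)) * v t = 0)
    ↔
    (∀ t, deriv (deriv (fun s => v s ^ (((l : ℝ) + 1) / 4))) t
        - ((l : ℝ) / 2) * (l1 + l2) * deriv (fun s => v s ^ (((l : ℝ) + 1) / 4)) t
        + (((l : ℝ) + 1) / 4)
            * (((l : ℝ) + 1) * l1 * l2 - l1 ^ 2 - l2 ^ 2 + Sb / (l : ℝ))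
            * v t ^ (((l : ℝ) + 1) / 4) = 0) := by
  have hexponent : ((l : ℝ) - 3) / 4 = ((l : ℝ) + 1) / 4 - 1 := by ring
  rw [hexponent]
  exact RpowSubstitution.ode_iff_ode_rpow _ (by positivity) (hv.differentiable two_ne_zero)
    hv.differentiable_deriv_two hvpos _ _

/-- For `l ≠ 3` a positive integer, `λ₁, λ₂ ≠ 0`, `S̄` constant, a positive
function `v` satisfies the nonlinear constant-scalar-curvature equation (36)
`v'' + ((l−3)/4)(v')²/v − (l/2)(λ₁+λ₂) v' + [(l+1)λ₁λ₂ − λ₁² − λ₂² + S̄/l] v = 0`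
iff `w := v^{(l+1)/4}` satisfies the linear equation
`w'' − (l/2)(λ₁+λ₂) w' + ((l+1)/4)[(l+1)λ₁λ₂ − λ₁² − λ₂² + S̄/l] w = 0`. -/
theorem quarter_symmetric_scalar_ODE_substitution
    (l : ℕ) (hlpos : 0 < l) (hl3 : l ≠ 3)
    (l1 l2 Sb : ℝ) (hl1 : l1 ≠ 0) (hl2 : l2 ≠ 0)
    (v : ℝ → ℝ) (hvpos : ∀ t, 0 < v t) (hv : ContDiff ℝ 2 v) :
    (∀ t, deriv (deriv v) t + (((l : ℝ) - 3) / 4) * (deriv v t) ^ 2 / v t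
        - ((l : ℝ) / 2) * (l1 + l2) * deriv v t
        + (((l : ℝ) + 1) * l1 * l2 - l1 ^ 2 - l2 ^ 2 + Sb / (l : ℝ)) * v t = 0)
    ↔
    (∀ t, deriv (deriv (fun s => v s ^ (((l : ℝ) + 1) / 4))) t
        - ((l : ℝ) / 2) * (l1 + l2) * deriv (fun s => v s ^ (((l : ℝ) + 1) / 4)) t
        + (((l : ℝ) + 1) / 4)
            * (((l : ℝ) + 1) * l1 * l2 - l1 ^ 2 - l2 ^ 2 + Sb / (l : ℝ))
            * v t ^ (((l : ℝ) + 1) / 4) = 0) :=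
  quarter_symmetric_scalar_ODE_substitution_general l l1 l2 Sb v hvpos hv
end

section
/- Let M = B ×_{b₁}F₁ ×⋯× _{b_m}F_m be a multiply twisted product with dim F_i = l_i > 1 for all i, equipped with the quarter-symmetric connection ∇̄ with P ∈ Γ(TB). Then (M,∇̄) is mixed Ricci-flat (i.e. R̄ic(X,V) = R̄ic(V,X) = 0 for X ∈ Γ(TB), V ∈ Γ(TF_i)) if and only if M can be expressed as a multiply warped product (each b_i depends only on B). In particular, if (M,∇̄) is Einstein then M can be expressed as a multiply warped product. -/
private lemma factor_of_mixed
    {EB F : Type*} [NormedAddCommGroup EB] [NormedSpace ℝ EB]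
    [NormedAddCommGroup F] [NormedSpace ℝ F]
    (b : EB → F → ℝ) (hbpos : ∀ x y, 0 < b x y)
    (hb : ContDiff ℝ (⊤ : ℕ∞) (fun p : EB × F => b p.1 p.2))
    (hmix : ∀ (x : EB) (y : F) (X : EB) (V : F),
      fderiv ℝ (fun y' => fderiv ℝ (fun x' => Real.log (b x' y')) x X) y V = 0) :
    ∃ (φ : EB → ℝ) (ψ : F → ℝ),
      (∀ x, 0 < φ x) ∧ (∀ y, 0 < ψ y) ∧ ∀ x y, b x y = φ x * ψ y := by
  set h : EB × F → ℝ := fun p => Real.log (b p.1 p.2) with hh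
  have hsm : ContDiff ℝ (⊤ : ℕ∞) h := hb.log (fun p => (hbpos p.1 p.2).ne')
  have hdiffx : ∀ (y0 : F), Differentiable ℝ (fun x' => Real.log (b x' y0)) := by
    intro y0
    have : (fun x' => Real.log (b x' y0)) = fun x' => h (x', y0) := rfl
    rw [this]
    exact (hsm.differentiable (by simp)).comp (differentiable_id.prodMk (differentiable_const y0))
  -- partial derivative formula
  have hpart : ∀ (x : EB) (y : F) (X : EB),
      fderiv ℝ (fun x' => Real.log (b x' y)) x X = fderiv ℝ h (x, y) (X, 0) := by
    intro x y X
    have h1 : HasFDerivAt (fun x' : EB => (x', y)) (ContinuousLinearMap.inl ℝ EB F) x :=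
      hasFDerivAt_prodMk_left x y
    have h2 : HasFDerivAt h (fderiv ℝ h (x, y)) (x, y) :=
      (hsm.differentiable (by simp) (x, y)).hasFDerivAt
    have h3 := (h2.comp x h1).fderiv
    rw [Function.comp_def] at h3
    have : (fun x' => Real.log (b x' y)) = fun x' => h (x', y) := rfl
    rw [this, h3]
    simp
  -- constancy in the fiber variable
  have hconst_y : ∀ (x : EB) (X : EB) (y y' : F),
      fderiv ℝ (fun x' => Real.log (b x' y)) x X
        = fderiv ℝ (fun x' => Real.log (b x' y')) x X := by
    intro x X y y'
    set g : F → ℝ := fun y0 => fderiv ℝ (fun x' => Real.log (b x' y0)) x X with hg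
    have hgeq : g = fun y0 => fderiv ℝ h (x, y0) (X, 0) :=
      funext (fun y0 => hpart x y0 X)
    have hgdiff : Differentiable ℝ g := by
      rw [hgeq]
      have hf' : ContDiff ℝ (⊤ : ℕ∞) (fderiv ℝ h) := hsm.fderiv_right (by simp)
      exact ((hf'.comp (contDiff_const.prodMk contDiff_id)).clm_apply
        contDiff_const).differentiable (by simp)
    have hg0 : ∀ y0, fderiv ℝ g y0 = 0 := fun y0 =>
      ContinuousLinearMap.ext fun V => hmix x y0 X V
    exact is_const_of_fderiv_eq_zero hgdiff hg0 y y'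
  -- additive splitting of log b
  have hmain : ∀ x y, Real.log (b x y)
      = Real.log (b x 0) + Real.log (b 0 y) - Real.log (b 0 0) := by
    intro x y
    set k : EB → ℝ := fun x' => Real.log (b x' y) - Real.log (b x' 0) with hk
    have hkdiff : Differentiable ℝ k := (hdiffx y).sub (hdiffx 0)
    have hk0 : ∀ x', fderiv ℝ k x' = 0 := by
      intro x'
      ext X
      have : fderiv ℝ k x' X
          = fderiv ℝ (fun x'' => Real.log (b x'' y)) x' X
            - fderiv ℝ (fun x'' => Real.log (b x'' 0)) x' X := by
        rw [hk, fderiv_fun_sub (hdiffx y x') (hdiffx 0 x')]; simp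
      rw [this, hconst_y x' X y 0]
      simp
    have := is_const_of_fderiv_eq_zero hkdiff hk0 x 0
    have hx : Real.log (b x y) - Real.log (b x 0)
        = Real.log (b 0 y) - Real.log (b 0 0) := this
    linarith
  refine ⟨fun x => b x 0, fun y => b 0 y / b 0 0, fun x => hbpos x 0,
    fun y => div_pos (hbpos 0 y) (hbpos 0 0), ?_⟩
  intro x y
  have hxy := hmain x y
  have : b x y = Real.exp (Real.log (b x y)) := (Real.exp_log (hbpos x y)).symm
  rw [this, hxy, Real.exp_sub, Real.exp_add, Real.exp_log (hbpos x 0),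
    Real.exp_log (hbpos 0 y), Real.exp_log (hbpos 0 0)]
  ring

private lemma mixed_of_factor
    {EB F : Type*} [NormedAddCommGroup EB] [NormedSpace ℝ EB]
    [NormedAddCommGroup F] [NormedSpace ℝ F]
    (b : EB → F → ℝ) (φ : EB → ℝ) (ψ : F → ℝ)
    (hφ : ∀ x, 0 < φ x) (hψ : ∀ y, 0 < ψ y)
    (hfac : ∀ x y, b x y = φ x * ψ y)
    (x : EB) (y : F) (X : EB) (V : F) :
    fderiv ℝ (fun y' => fderiv ℝ (fun x' => Real.log (b x' y')) x X) y V = 0 := by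
  have hcst : (fun y' => fderiv ℝ (fun x' => Real.log (b x' y')) x X)
      = fun _ => fderiv ℝ (fun x' => Real.log (φ x')) x X := by
    funext y'
    have : (fun x' => Real.log (b x' y'))
        = fun x' => Real.log (φ x') + Real.log (ψ y') := by
      funext x'; rw [hfac x' y', Real.log_mul (hφ x').ne' (hψ y').ne']
    rw [this, fderiv_add_const]
  rw [hcst, fderiv_fun_const]
  simp

/-- Corollary 4.6: a multiply twisted product
`M = B ×_{b₁}F₁ ×⋯×_{b_m}F_m` (with `dim F_i = l_i > 1`, quarter-symmetric connection
with `P ∈ Γ(TB)`) is mixed Ricci-flat iff it can be expressed as a multiply warped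
product.  Analytic model: `B`, `F i` are (connected) real normed spaces, the twisting
functions are `b i : B → F i → (0,∞)`; by Proposition 4.5(2) the mixed Ricci components
are `R̄ic(X,V) = R̄ic(V,X) = (l_i − 1)·V X(ln b_i)`, i.e. `(l_i − 1)` times the mixed
second derivative of `ln b_i` in a base direction `X` and a fiber direction `V`;
`M` is expressible as a multiply warped product iff each `b_i` factors as
`b_i(x,y) = φ_i(x) ψ_i(y)` (so that `ψ_i` can be absorbed into `g_{F_i}`).
In particular, if `(M,∇̄)` is Einstein (so that all mixed Ricci components equal
`α g(X,V) = 0`), then `M` can be expressed as a multiply warped product. -/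
theorem multiply_twisted_mixed_Ricci_flat_iff_warped
    (m : ℕ)
    (EB : Type*) [NormedAddCommGroup EB] [NormedSpace ℝ EB]
    (EF : Fin m → Type*) [∀ i, NormedAddCommGroup (EF i)] [∀ i, NormedSpace ℝ (EF i)]
    (l : Fin m → ℕ) (hl : ∀ i, 1 < l i)
    (l1 l2 : ℝ) (hl1 : l1 ≠ 0) (hl2 : l2 ≠ 0)
    (b : ∀ i : Fin m, EB → EF i → ℝ)
    (hbpos : ∀ i x y, 0 < b i x y)
    (hbsmooth : ∀ i, ContDiff ℝ (⊤ : ℕ∞) (fun p : EB × EF i => b i p.1 p.2)) :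
    -- mixed Ricci-flat ↔ multiply warped product
    ((∀ (i : Fin m) (x : EB) (y : EF i) (X : EB) (V : EF i),
        ((l i : ℝ) - 1) *
          fderiv ℝ (fun y' => fderiv ℝ (fun x' => Real.log (b i x' y')) x X) y V = 0)
      ↔
      (∀ i : Fin m, ∃ (φ : EB → ℝ) (ψ : EF i → ℝ),
        (∀ x, 0 < φ x) ∧ (∀ y, 0 < ψ y) ∧ ∀ x y, b i x y = φ x * ψ y)) ∧
    -- in particular: Einstein ⇒ multiply warped (the mixed metric components vanish,
    -- so the Einstein condition forces the mixed Ricci components to be α·0 = 0)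
    (∀ α : ℝ, (∀ (i : Fin m) (x : EB) (y : EF i) (X : EB) (V : EF i),
        ((l i : ℝ) - 1) *
          fderiv ℝ (fun y' => fderiv ℝ (fun x' => Real.log (b i x' y')) x X) y V
          = α * 0) →
      (∀ i : Fin m, ∃ (φ : EB → ℝ) (ψ : EF i → ℝ),
        (∀ x, 0 < φ x) ∧ (∀ y, 0 < ψ y) ∧ ∀ x y, b i x y = φ x * ψ y)) := by
  have hli : ∀ i : Fin m, ((l i : ℝ) - 1) ≠ 0 := by
    intro i
    have : (1 : ℝ) < (l i : ℝ) := by exact_mod_cast hl i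
    linarith
  have main : (∀ (i : Fin m) (x : EB) (y : EF i) (X : EB) (V : EF i),
        ((l i : ℝ) - 1) *
          fderiv ℝ (fun y' => fderiv ℝ (fun x' => Real.log (b i x' y')) x X) y V = 0)
      ↔
      (∀ i : Fin m, ∃ (φ : EB → ℝ) (ψ : EF i → ℝ),
        (∀ x, 0 < φ x) ∧ (∀ y, 0 < ψ y) ∧ ∀ x y, b i x y = φ x * ψ y) := by
    constructor
    · intro H i
      refine factor_of_mixed (b i) (hbpos i) (hbsmooth i) ?_
      intro x y X V
      have := H i x y X V
      exact (mul_eq_zero.mp this).resolve_left (hli i)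
    · intro H i x y X V
      obtain ⟨φ, ψ, hφ, hψ, hfac⟩ := H i
      rw [mixed_of_factor (b i) φ ψ hφ hψ hfac x y X V, mul_zero]
  refine ⟨main, fun α hα => main.mp ?_⟩
  intro i x y X V
  rw [hα i x y X V, mul_zero]
end

section
/- Let M = I ×_{b₁}F₁ ×⋯× _{b_m}F_m be a multiply warped product with P = ∂/∂t and quarter-symmetric connection ∇̄. If (M,∇̄) has constant scalar curvature S̄, then each fiber (F_i,∇^{F_i}) has constant scalar curvature S^{F_i}. -/
open Set

/-! Freeze `t` in the interval. In the formula for `S̄` only the term `∑ᵢ S^{Fᵢ}(qᵢ) / bᵢ(t)²`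
depends on the point `q` of the fibres, so it is constant in `q`; moving one coordinate at a
time then shows that each summand is constant. -/

theorem Finset.apply_eq_of_forall_sum_eq {ι M : Type*} [Fintype ι] [DecidableEq ι]
    [AddCommGroup M] {Q : ι → Type*} (g : ∀ j, Q j → M) (q₀ : ∀ j, Q j)
    (h : ∀ q : ∀ j, Q j, ∑ j, g j (q j) = ∑ j, g j (q₀ j)) (i : ι) (x : Q i) :
    g i x = g i (q₀ i) := by
  have hdiff : ∑ j, (g j (Function.update q₀ i x j) - g j (q₀ j)) = 0 := by
    rw [Finset.sum_sub_distrib, h, sub_self]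
  rw [Finset.sum_eq_single i (fun j _ hji => by simp [Function.update_of_ne hji])
    (by simp)] at hdiff
  simpa [sub_eq_zero] using hdiff

theorem multiply_warped_constant_scalar_implies_fibers_constant_general
    (m : ℕ)
    (l : Fin m → ℕ)
    (l1 l2 : ℝ)
    (a c : ℝ) (hac : a < c)
    (b : Fin m → ℝ → ℝ) (hbpos : ∀ i, ∀ t ∈ Ioo a c, 0 < b i t)
    (nbar : ℕ)
    (Q : Fin m → Type*) [∀ i, Nonempty (Q i)]
    (SF : ∀ i, Q i → ℝ)
    (Sbar : ℝ → (∀ i, Q i) → ℝ)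
    (hSbar : ∀ t ∈ Ioo a c, ∀ q : ∀ i, Q i, Sbar t q =
      -2 * ∑ i, (l i : ℝ) * deriv (deriv (b i)) t / b i t
      + ∑ i, SF i (q i) / (b i t) ^ 2
      - ∑ i, (l i : ℝ) * ((l i : ℝ) - 1) * (deriv (b i) t) ^ 2 / (b i t) ^ 2
      - ∑ i, ∑ s ∈ Finset.univ.erase i,
          (l i : ℝ) * (l s : ℝ) * deriv (b i) t * deriv (b s) t / (b i t * b s t)
      + ∑ i, (l i : ℝ) * (((nbar : ℝ) - 1) * l1 + (l i : ℝ) * l2)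
          * deriv (b i) t / b i t
      + l2 * ∑ i, ∑ s ∈ Finset.univ.erase i,
          (l i : ℝ) * (l s : ℝ) * deriv (b s) t / b s t
      - ∑ i, (l i : ℝ) * ((nbar : ℝ) * l1 * l2 - (l1 ^ 2 + l2 ^ 2)))
    (Sb : ℝ)
    (hconst : ∀ t ∈ Ioo a c, ∀ q : ∀ i, Q i, Sbar t q = Sb) :
    ∀ i, ∃ ci : ℝ, ∀ x : Q i, SF i x = ci := by
  intro i
  obtain ⟨q₀⟩ : Nonempty (∀ j, Q j) := inferInstance
  obtain ⟨t, ht⟩ : (Ioo a c).Nonempty := nonempty_Ioo.2 hac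
  have hfiber : ∀ q : ∀ j, Q j,
      ∑ j, SF j (q j) / b j t ^ 2 = ∑ j, SF j (q₀ j) / b j t ^ 2 := by
    intro q
    linarith [hSbar t ht q, hSbar t ht q₀, hconst t ht q, hconst t ht q₀]
  refine ⟨SF i (q₀ i), fun x => ?_⟩
  have hb2 : b i t ^ 2 ≠ 0 := (pow_pos (hbpos i t ht) 2).ne'
  exact (div_left_inj' hb2).1
    (Finset.apply_eq_of_forall_sum_eq (fun j y => SF j y / b j t ^ 2) q₀ hfiber i x)

/-- Theorem 4.13: if the multiply warped product
`M = I ×_{b₁}F₁ ×⋯×_{b_m}F_m` (metric `−dt² ⊕ b₁²g_{F₁} ⊕⋯⊕ b_m²g_{F_m}`,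
`P = ∂/∂t`, quarter-symmetric connection `∇̄`) has constant scalar curvature `S̄`, then
each fiber `(F_i,∇^{F_i})` has constant scalar curvature `S^{F_i}`.  Analytic model:
`Q i` is the (nonempty) set of points of `F_i`, `SF i : Q i → ℝ` its scalar curvature,
and by Proposition 4.9 (equation (38)) the scalar curvature of `∇̄` at
`(t, q₁, …, q_m)` is given by the displayed formula `hSbar`. -/
theorem multiply_warped_constant_scalar_implies_fibers_constant
    (m : ℕ) (hm : 0 < m)
    (l : Fin m → ℕ) (hl : ∀ i, 0 < l i)
    (l1 l2 : ℝ) (hl1 : l1 ≠ 0) (hl2 : l2 ≠ 0)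
    (a c : ℝ) (hac : a < c)
    (b : Fin m → ℝ → ℝ) (hbpos : ∀ i, ∀ t ∈ Ioo a c, 0 < b i t)
    (hb : ∀ i, ContDiffOn ℝ 2 (b i) (Ioo a c))
    (nbar : ℕ) (hnbar : nbar = 1 + ∑ i, l i)
    (Q : Fin m → Type*) [∀ i, Nonempty (Q i)]
    (SF : ∀ i, Q i → ℝ)
    (Sbar : ℝ → (∀ i, Q i) → ℝ)
    (hSbar : ∀ t ∈ Ioo a c, ∀ q : ∀ i, Q i, Sbar t q =
      -2 * ∑ i, (l i : ℝ) * deriv (deriv (b i)) t / b i t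
      + ∑ i, SF i (q i) / (b i t) ^ 2
      - ∑ i, (l i : ℝ) * ((l i : ℝ) - 1) * (deriv (b i) t) ^ 2 / (b i t) ^ 2
      - ∑ i, ∑ s ∈ Finset.univ.erase i,
          (l i : ℝ) * (l s : ℝ) * deriv (b i) t * deriv (b s) t / (b i t * b s t)
      + ∑ i, (l i : ℝ) * (((nbar : ℝ) - 1) * l1 + (l i : ℝ) * l2)
          * deriv (b i) t / b i t
      + l2 * ∑ i, ∑ s ∈ Finset.univ.erase i,
          (l i : ℝ) * (l s : ℝ) * deriv (b s) t / b s t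
      - ∑ i, (l i : ℝ) * ((nbar : ℝ) * l1 * l2 - (l1 ^ 2 + l2 ^ 2)))
    (Sb : ℝ)
    (hconst : ∀ t ∈ Ioo a c, ∀ q : ∀ i, Q i, Sbar t q = Sb) :
    ∀ i, ∃ ci : ℝ, ∀ x : Q i, SF i x = ci :=
  multiply_warped_constant_scalar_implies_fibers_constant_general m l l1 l2 a c hac b hbpos nbar Q
    SF Sbar hSbar Sb hconst
end

section
/- Let λ₁, λ₂ be nonzero reals with λ₂ ≠ 3λ₁ and suppose p₁, p₂, p₃ are pairwise distinct reals with ζ = p₁+p₂+p₃ ≠ 0, η = p₁²+p₂²+p₃². Suppose φ: I → (0,∞) satisfies the type (III) generalized Kasner Einstein system (66a)-(66d) with Einstein constant α (fibers 1-dimensional, so α₁=α₂=α₃=0) and φ is nonconstant. Then α = 0, η/ζ² = (3λ₁²−λ₂²)/(3λ₁−λ₂)², and φ(t) = c·e^{((3λ₁−λ₂)/ζ)t} for some constant c > 0. -/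
open Set Real

/-!
Subtracting the fibre equations (66b) and (66c) (possible since `p₁ ≠ p₂`) kills the common
bracket `φ''/φ + (ζ - 1)(φ'/φ)² + (λ₂ - 3λ₁)φ'/φ`, and then either fibre equation says that
`φ'/φ` is a constant `K`, so `φ = c e^{Kt}`. Plugging `φ'/φ = K`, `φ''/φ = K²` back in turns the
system into polynomial equations in `K`: the bracket gives `K (ζK - (3λ₁ - λ₂)) = 0`, where
`K ≠ 0` because `φ` is nonconstant, and the fibre and base equations then force `α = 0` and the
value of `η / ζ²`.
-/

theorem eq_zero_and_eq_of_neg_mul_add_eq {R : Type*} [CommRing R] [IsDomain R]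
    {p q x y c : R} (hpq : p ≠ q) (hp : -p * x + y = c) (hq : -q * x + y = c) :
    x = 0 ∧ y = c := by
  have hx : x = 0 := by
    have h : (q - p) * x = 0 := by linear_combination hp - hq
    exact (mul_eq_zero.mp h).resolve_left (sub_ne_zero.mpr hpq.symm)
  exact ⟨hx, by simpa [hx] using hp⟩

section ExponentialSolutions

variable {f : ℝ → ℝ} {s : Set ℝ} {K : ℝ}

theorem IsOpen.exists_eq_mul_exp_of_deriv_eq_mul (hs : IsOpen s) (hs' : IsPreconnected s)
    (hf : DifferentiableOn ℝ f s) (hf' : ∀ t ∈ s, deriv f t = K * f t) :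
    ∃ c, ∀ t ∈ s, f t = c * exp (K * t) := by
  have hderiv : ∀ t ∈ s, HasDerivAt (fun u => f u * exp (-K * u)) 0 t := by
    intro t ht
    have hexp : HasDerivAt (fun u => exp (-K * u)) (exp (-K * t) * -K) t := by
      simpa using ((hasDerivAt_id t).const_mul (-K)).exp
    refine (((hf t ht).differentiableAt (hs.mem_nhds ht)).hasDerivAt.mul hexp).congr_deriv ?_
    rw [hf' t ht]
    ring
  obtain ⟨c, hc⟩ := hs.exists_is_const_of_deriv_eq_zero hs'
    (fun t ht => (hderiv t ht).differentiableAt.differentiableWithinAt)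
    (fun t ht => (hderiv t ht).deriv)
  refine ⟨c, fun t ht => ?_⟩
  rw [← hc t ht, mul_assoc, ← exp_add]
  simp

theorem IsOpen.deriv_deriv_eq_sq_mul_of_deriv_eq_mul (hs : IsOpen s)
    (hf : DifferentiableOn ℝ f s) (hf' : ∀ t ∈ s, deriv f t = K * f t) {t : ℝ} (ht : t ∈ s) :
    deriv (deriv f) t = K ^ 2 * f t := by
  have hev : deriv f =ᶠ[nhds t] fun u => K * f u :=
    Filter.eventually_of_mem (hs.mem_nhds ht) hf'
  rw [hev.deriv_eq, deriv_const_mul _ ((hf t ht).differentiableAt (hs.mem_nhds ht)), hf' t ht]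
  ring

end ExponentialSolutions

/-- The hypotheses are (66a)-(66d) after substituting `φ'/φ = K` and `φ''/φ = K²`. -/
theorem kasner_constants_of_exponential {l1 l2 ζ η α K : ℝ} (hζ : ζ ≠ 0) (hK : K ≠ 0)
    (hbracket : K ^ 2 + (ζ - 1) * K ^ 2 + (l2 - 3 * l1) * K = 0)
    (hfibre : l2 * ζ * K = α - l2 ^ 2 + 3 * l1 * l2)
    (hbase : ζ * (l2 * K - K ^ 2) - (η - ζ) * K ^ 2 + 3 * (l1 ^ 2 - l1 * l2) = α) :
    K = (3 * l1 - l2) / ζ ∧ α = 0 ∧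
      η / ζ ^ 2 = (3 * l1 ^ 2 - l2 ^ 2) / (3 * l1 - l2) ^ 2 := by
  have hζK : ζ * K = 3 * l1 - l2 := by
    have h : K * (ζ * K - (3 * l1 - l2)) = 0 := by linear_combination hbracket
    linear_combination (mul_eq_zero.mp h).resolve_left hK
  have hm : 3 * l1 - l2 ≠ 0 := hζK ▸ mul_ne_zero hζ hK
  have hα : α = 0 := by linear_combination -hfibre + l2 * hζK
  refine ⟨by rw [eq_div_iff hζ, mul_comm, hζK], hα, ?_⟩
  rw [div_eq_div_iff (pow_ne_zero 2 hζ) (pow_ne_zero 2 hm)]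
  linear_combination (-ζ ^ 2) * hbase + (ζ ^ 2 * l2 - η * (ζ * K + (3 * l1 - l2))) * hζK
    - ζ ^ 2 * hα

theorem Kasner_typeIII_Einstein_nonconstant_general
    (l1 l2 : ℝ) (hl2 : l2 ≠ 0)
    (p₁ p₂ p₃ : ℝ) (h12 : p₁ ≠ p₂)
    (a b : ℝ)
    (ζ η : ℝ)
    (hζ : ζ ≠ 0)
    (φ : ℝ → ℝ) (hφpos : ∀ t ∈ Ioo a b, 0 < φ t) (hφ : ContDiffOn ℝ 2 φ (Ioo a b))
    (α : ℝ)
    -- (66a)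
    (h66a : ∀ t ∈ Ioo a b,
      ζ * (l2 * deriv φ t / φ t - deriv (deriv φ) t / φ t)
        - (η - ζ) * (deriv φ t) ^ 2 / (φ t) ^ 2 + 3 * (l1 ^ 2 - l1 * l2) = α)
    -- (66b)-(66d)
    (h66bcd : ∀ pi ∈ ({p₁, p₂, p₃} : Set ℝ), ∀ t ∈ Ioo a b,
      -pi * (deriv (deriv φ) t / φ t + (ζ - 1) * (deriv φ t) ^ 2 / (φ t) ^ 2
          + (l2 - 3 * l1) * deriv φ t / φ t)
        + l2 * ζ * deriv φ t / φ t = α - l2 ^ 2 + 3 * l1 * l2)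
    -- φ is nonconstant on I
    (hnonconst : ∃ t₁ ∈ Ioo a b, ∃ t₂ ∈ Ioo a b, φ t₁ ≠ φ t₂) :
    α = 0 ∧
    η / ζ ^ 2 = (3 * l1 ^ 2 - l2 ^ 2) / (3 * l1 - l2) ^ 2 ∧
    ∃ c : ℝ, 0 < c ∧ ∀ t ∈ Ioo a b, φ t = c * exp (((3 * l1 - l2) / ζ) * t) := by
  set K := (α - l2 ^ 2 + 3 * l1 * l2) / (l2 * ζ) with hKdef
  have hfibres : ∀ t ∈ Ioo a b, _ := fun t ht =>
    eq_zero_and_eq_of_neg_mul_add_eq h12 (h66bcd p₁ (by simp) t ht) (h66bcd p₂ (by simp) t ht)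
  have hlog : ∀ t ∈ Ioo a b, deriv φ t / φ t = K := fun t ht =>
    eq_div_of_mul_eq (mul_ne_zero hl2 hζ) (by rw [mul_comm, ← mul_div_assoc]; exact (hfibres t ht).2)
  have hφ' : ∀ t ∈ Ioo a b, deriv φ t = K * φ t := fun t ht =>
    (div_eq_iff (hφpos t ht).ne').mp (hlog t ht)
  have hdiff : DifferentiableOn ℝ φ (Ioo a b) := hφ.differentiableOn (by norm_num)
  obtain ⟨c, hc⟩ := isOpen_Ioo.exists_eq_mul_exp_of_deriv_eq_mul isPreconnected_Ioo hdiff hφ'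
  obtain ⟨t₁, ht₁, t₂, ht₂, hφne⟩ := hnonconst
  have hK : K ≠ 0 := fun hK0 => hφne (by simp [hc t₁ ht₁, hc t₂ ht₂, hK0])
  have hlog2 : deriv (deriv φ) t₁ / φ t₁ = K ^ 2 := by
    rw [isOpen_Ioo.deriv_deriv_eq_sq_mul_of_deriv_eq_mul hdiff hφ' ht₁,
      mul_div_cancel_right₀ _ (hφpos t₁ ht₁).ne']
  have hbracket := (hfibres t₁ ht₁).1
  have hbase := h66a t₁ ht₁
  simp only [mul_div_assoc, ← div_pow, hlog t₁ ht₁, hlog2] at hbracket hbase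
  obtain ⟨hKval, hα, hη⟩ := kasner_constants_of_exponential hζ hK hbracket
    (mul_div_cancel₀ _ (mul_ne_zero hl2 hζ)) hbase
  refine ⟨hα, hη, c, ?_, fun t ht => hKval ▸ hc t ht⟩
  exact pos_of_mul_pos_left (hc t₁ ht₁ ▸ hφpos t₁ ht₁) (exp_pos _).le

/-- Type (III) generalized Kasner Einstein system.  Let `λ₁, λ₂ ≠ 0` with
`λ₂ ≠ 3λ₁`, `p₁, p₂, p₃` pairwise distinct with `ζ = p₁+p₂+p₃ ≠ 0`,
`η = p₁²+p₂²+p₃²`, and let `φ : I → (0,∞)` be a nonconstant solution of the system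
(66a)-(66d) with Einstein constant `α`:
`ζ(λ₂φ'/φ − φ''/φ) − (η−ζ)(φ')²/φ² + 3(λ₁²−λ₁λ₂) = α`, and for each `i`:
`−p_i[φ''/φ + (ζ−1)(φ')²/φ² + (λ₂−3λ₁)φ'/φ] + λ₂ζφ'/φ = α − λ₂² + 3λ₁λ₂`.
Then `α = 0`, `η/ζ² = (3λ₁²−λ₂²)/(3λ₁−λ₂)²`, and `φ(t) = c e^{((3λ₁−λ₂)/ζ)t}` for some
`c > 0`. -/
theorem Kasner_typeIII_Einstein_nonconstant
    (l1 l2 : ℝ) (hl1 : l1 ≠ 0) (hl2 : l2 ≠ 0) (hne : l2 ≠ 3 * l1)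
    (p₁ p₂ p₃ : ℝ) (h12 : p₁ ≠ p₂) (h23 : p₂ ≠ p₃) (h13 : p₁ ≠ p₃)
    (a b : ℝ) (hab : a < b)
    (ζ η : ℝ) (hζdef : ζ = p₁ + p₂ + p₃) (hηdef : η = p₁ ^ 2 + p₂ ^ 2 + p₃ ^ 2)
    (hζ : ζ ≠ 0)
    (φ : ℝ → ℝ) (hφpos : ∀ t ∈ Ioo a b, 0 < φ t) (hφ : ContDiffOn ℝ 2 φ (Ioo a b))
    (α : ℝ)
    -- (66a)
    (h66a : ∀ t ∈ Ioo a b,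
      ζ * (l2 * deriv φ t / φ t - deriv (deriv φ) t / φ t)
        - (η - ζ) * (deriv φ t) ^ 2 / (φ t) ^ 2 + 3 * (l1 ^ 2 - l1 * l2) = α)
    -- (66b)-(66d)
    (h66bcd : ∀ pi ∈ ({p₁, p₂, p₃} : Set ℝ), ∀ t ∈ Ioo a b,
      -pi * (deriv (deriv φ) t / φ t + (ζ - 1) * (deriv φ t) ^ 2 / (φ t) ^ 2
          + (l2 - 3 * l1) * deriv φ t / φ t)
        + l2 * ζ * deriv φ t / φ t = α - l2 ^ 2 + 3 * l1 * l2)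
    -- φ is nonconstant on I
    (hnonconst : ∃ t₁ ∈ Ioo a b, ∃ t₂ ∈ Ioo a b, φ t₁ ≠ φ t₂) :
    α = 0 ∧
    η / ζ ^ 2 = (3 * l1 ^ 2 - l2 ^ 2) / (3 * l1 - l2) ^ 2 ∧
    ∃ c : ℝ, 0 < c ∧ ∀ t ∈ Ioo a b, φ t = c * exp (((3 * l1 - l2) / ζ) * t) :=
  Kasner_typeIII_Einstein_nonconstant_general l1 l2 hl2 p₁ p₂ p₃ h12 a b ζ η hζ φ hφpos hφ α h66a
    h66bcd hnonconst
end
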